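/- Let H be a handle of a finite simple graph G and let J be a co-handle of H. Then J is an interesting set of the complement graph of G. -/

import Mathlib

open SimpleGraph

/-- The graph `G/ab` obtained from `G` by contracting the two (non-adjacent) vertices
`a` and `b` : vertex `b` is removed and `a` plays the role of the new contracted vertex,
adjacent to every vertex that was adjacent to `a` or to `b`. -/
def contract {V : Type} (G : SimpleGraph V) (a b : V) : SimpleGraph {z : V // z ≠ b} where
  Adj u v := u ≠ v ∧ (G.Adj u.1 v.1 ∨ (u.1 = a ∧ G.Adj b v.1) ∨ (v.1 = a ∧ G.Adj u.1 b))
  symm := by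
    refine ⟨?_⟩
    rintro u v ⟨h1, h2⟩
    refine ⟨h1.symm, ?_⟩
    rcases h2 with h | ⟨h, h'⟩ | ⟨h, h'⟩
    · exact Or.inl h.symm
    · exact Or.inr (Or.inr ⟨h, h'.symm⟩)
    · exact Or.inr (Or.inl ⟨h, h'.symm⟩)
  loopless := by refine ⟨?_⟩; rintro u ⟨h1, -⟩; exact h1 rfl

/-- A walk is chordless if it is a (simple) path and the only edges of `G` between
vertices of the walk are the edges of the walk, i.e. it is an induced path. -/
def IsChordless {V : Type} (G : SimpleGraph V) {x y : V} (p : G.Walk x y) : Prop :=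
  p.IsPath ∧ ∀ u v, u ∈ p.support → v ∈ p.support → G.Adj u v → p.toSubgraph.Adj u v

/-- `{x, y}` is an even pair: `x ≠ y`, non-adjacent, and every chordless path from
`x` to `y` has even length. -/
def IsEvenPair {V : Type} (G : SimpleGraph V) (x y : V) : Prop :=
  x ≠ y ∧ ¬ G.Adj x y ∧ ∀ p : G.Walk x y, IsChordless G p → Even p.length

/-- A hole: a chordless cycle with at least four vertices (the only edges of `G`
between vertices of the cycle are the cycle edges). -/
def IsHole {V : Type} (G : SimpleGraph V) {v : V} (p : G.Walk v v) : Prop :=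
  p.IsCycle ∧ 4 ≤ p.length ∧
    ∀ u w, u ∈ p.support → w ∈ p.support → G.Adj u w → p.toSubgraph.Adj u w

/-- The set `S` induces a prism in `G`: two vertex-disjoint triangles
`a₁a₂a₃` and `b₁b₂b₃` joined by three vertex-disjoint paths `Pᵢ` from `aᵢ` to `bᵢ`,
with no other edges than those of the triangles and of the paths. -/
def IsPrismOn {V : Type} (G : SimpleGraph V) (S : Set V) : Prop :=
  ∃ (a₁ a₂ a₃ b₁ b₂ b₃ : V) (P₁ : G.Walk a₁ b₁) (P₂ : G.Walk a₂ b₂) (P₃ : G.Walk a₃ b₃),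
    P₁.IsPath ∧ P₂.IsPath ∧ P₃.IsPath ∧
    a₁ ≠ b₁ ∧ a₂ ≠ b₂ ∧ a₃ ≠ b₃ ∧
    (∀ u ∈ P₁.support, ∀ v ∈ P₂.support, u ≠ v) ∧
    (∀ u ∈ P₁.support, ∀ v ∈ P₃.support, u ≠ v) ∧
    (∀ u ∈ P₂.support, ∀ v ∈ P₃.support, u ≠ v) ∧
    S = {v | v ∈ P₁.support ∨ v ∈ P₂.support ∨ v ∈ P₃.support} ∧
    ∀ u ∈ S, ∀ v ∈ S, (G.Adj u v ↔
      (P₁.toSubgraph.Adj u v ∨ P₂.toSubgraph.Adj u v ∨ P₃.toSubgraph.Adj u v ∨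
        s(u, v) ∈ ({s(a₁, a₂), s(a₁, a₃), s(a₂, a₃),
                    s(b₁, b₂), s(b₁, b₃), s(b₂, b₃)} : Set (Sym2 V))))

/-- The class 𝒜 ("Artemis graphs"): no odd hole, no antihole of length at least 5,
and no prism, all as induced subgraphs. -/
def InArtemis {V : Type} (G : SimpleGraph V) : Prop :=
  (∀ (v : V) (p : G.Walk v v), IsHole G p → ¬ Odd p.length) ∧
  (∀ (v : V) (p : Gᶜ.Walk v v), IsHole Gᶜ p → ¬ 5 ≤ p.length) ∧
  ¬ ∃ S : Set V, IsPrismOn G S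

/-- A special even pair: an even pair whose contraction yields a graph with no prism. -/
def IsSpecialEvenPair {V : Type} (G : SimpleGraph V) (a b : V) : Prop :=
  IsEvenPair G a b ∧ ¬ ∃ S, IsPrismOn (contract G a b) S

/-- `C(T)`: the set of vertices outside `T` adjacent to every vertex of `T`. -/
def Cset {V : Type} (G : SimpleGraph V) (T : Set V) : Set V :=
  {v | v ∉ T ∧ ∀ t ∈ T, G.Adj v t}

/-- `N(X)`: the set of vertices outside `X` adjacent to at least one vertex of `X`. -/
def Nset {V : Type} (G : SimpleGraph V) (X : Set V) : Set V :=
  {v | v ∉ X ∧ ∃ x ∈ X, G.Adj v x}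

/-- `T` is interesting: `T` is non-empty, induces a connected subgraph of the
complement of `G`, and `C(T)` is not a clique of `G`. -/
def IsInteresting {V : Type} (G : SimpleGraph V) (T : Set V) : Prop :=
  T.Nonempty ∧ (Gᶜ.induce T).Connected ∧ ¬ G.IsClique (Cset G T)

/-- A maximal interesting set: interesting and not strictly contained in another
interesting set. -/
def IsMaximalInteresting {V : Type} (G : SimpleGraph V) (T : Set V) : Prop :=
  IsInteresting G T ∧ ∀ T', IsInteresting G T' → T ⊆ T' → T' = T

/-- A `T`-outer path: a chordless path whose two endvertices are in `C(T)` and whose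
interior vertices all lie outside `T ∪ C(T)`. -/
def IsOuterPath {V : Type} (G : SimpleGraph V) (T : Set V) {x y : V} (p : G.Walk x y) : Prop :=
  x ≠ y ∧ IsChordless G p ∧ x ∈ Cset G T ∧ y ∈ Cset G T ∧
  ∀ v ∈ p.support, v ≠ x → v ≠ y → v ∉ T ∪ Cset G T

/-- The set of interior vertices of a walk from `x` to `y`. -/
def walkInterior {V : Type} {G : SimpleGraph V} {x y : V} (p : G.Walk x y) : Set V :=
  {v | v ∈ p.support ∧ v ≠ x ∧ v ≠ y}

/-- A minimal `T`-outer path: no `T`-outer path has its interior strictly contained in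
the interior of `p`. -/
def IsMinimalOuterPath {V : Type} (G : SimpleGraph V) (T : Set V) {x y : V}
    (p : G.Walk x y) : Prop :=
  IsOuterPath G T p ∧
  ¬ ∃ (x' y' : V) (q : G.Walk x' y'), IsOuterPath G T q ∧ walkInterior q ⊂ walkInterior p

/-- For a minimal `T`-outer path `p = α z₁ ⋯ z_q β` (so `zᵢ = p.getVert i` for
`1 ≤ i ≤ p.length - 1`), the set `A` of vertices of `C(T)` adjacent to `z₁` and to none
of `z₂, …, z_q`. -/
def setA {V : Type} (G : SimpleGraph V) (T : Set V) {x y : V} (p : G.Walk x y) : Set V :=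
  {v | v ∈ Cset G T ∧ G.Adj v (p.getVert 1) ∧
    ∀ i, 2 ≤ i → i ≤ p.length - 1 → ¬ G.Adj v (p.getVert i)}

/-- The set `B` of vertices of `C(T)` adjacent to `z_q` and to none of `z₁, …, z_{q-1}`. -/
def setB {V : Type} (G : SimpleGraph V) (T : Set V) {x y : V} (p : G.Walk x y) : Set V :=
  {v | v ∈ Cset G T ∧ G.Adj v (p.getVert (p.length - 1)) ∧
    ∀ i, 1 ≤ i → i ≤ p.length - 2 → ¬ G.Adj v (p.getVert i)}

/-- `u <_A u'` : both in `A` and there is an odd chordless path from `u` to a vertex of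
`B` whose second vertex is `u'`. -/
def ltA {V : Type} (G : SimpleGraph V) (T : Set V) {x y : V} (p : G.Walk x y)
    (u u' : V) : Prop :=
  u ∈ setA G T p ∧ u' ∈ setA G T p ∧
  ∃ b ∈ setB G T p, ∃ q : G.Walk u b, IsChordless G q ∧ Odd q.length ∧ q.getVert 1 = u'

/-- `v <_B v'` : both in `B` and there is an odd chordless path from `v` to a vertex of
`A` whose second vertex is `v'`. -/
def ltB {V : Type} (G : SimpleGraph V) (T : Set V) {x y : V} (p : G.Walk x y)
    (v v' : V) : Prop :=
  v ∈ setB G T p ∧ v' ∈ setB G T p ∧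
  ∃ a ∈ setA G T p, ∃ q : G.Walk v a, IsChordless G q ∧ Odd q.length ∧ q.getVert 1 = v'

/-- `J` is a co-handle of `H`: `J` is a connected component of `G ∖ N(H)`, distinct
from `H`, with `N(J) = N(H)`. -/
def IsCohandleOf {V : Type} (G : SimpleGraph V) (J H : Set V) : Prop :=
  (∃ c : (G.induce (Nset G H)ᶜ).ConnectedComponent, Subtype.val '' c.supp = J) ∧
  J ≠ H ∧ Nset G J = Nset G H

/-- `H` is a handle of `G`. -/
def IsHandle {V : Type} (G : SimpleGraph V) (H : Set V) : Prop :=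
  2 ≤ H.ncard ∧ (G.induce H).Connected ∧ (∃ J, IsCohandleOf G J H) ∧
  ∀ v ∈ Nset G H, ∀ x y, x ∈ H → y ∈ H → G.Adj x y → (G.Adj v x ∨ G.Adj v y)

/-- `H` is a generalized handle of `G`: `H` contains at least one edge (but need not be
connected), some component `J ≠ H` of `G ∖ N(H)` satisfies `N(J) = N(H)`, and every
vertex of `N(H)` sees at least one endpoint of every edge of `G[H]`. -/
def IsGenHandle {V : Type} (G : SimpleGraph V) (H : Set V) : Prop :=
  (∃ x ∈ H, ∃ y ∈ H, G.Adj x y) ∧ (∃ J, IsCohandleOf G J H) ∧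
  ∀ v ∈ Nset G H, ∀ x y, x ∈ H → y ∈ H → G.Adj x y → (G.Adj v x ∨ G.Adj v y)

/-- A graph is even-contractile if it can be turned into a clique by a sequence of
contractions of even pairs. -/
inductive EvenContractile : {V : Type} → SimpleGraph V → Prop where
  | of_clique {V : Type} (G : SimpleGraph V) (h : G.IsClique Set.univ) : EvenContractile G
  | of_contract {V : Type} (G : SimpleGraph V) (a b : V) (h : IsEvenPair G a b)
      (hc : EvenContractile (contract G a b)) : EvenContractile G

private lemma aux_stay {V : Type} {G : SimpleGraph V} {H : Set V} :
    ∀ {a b : ↥((Nset G H)ᶜ)} (_ : (G.induce (Nset G H)ᶜ).Walk a b),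
      a.val ∈ H → b.val ∈ H := by
  intro a b p
  induction p with
  | nil => exact id
  | @cons a u b h q ih =>
    intro ha
    apply ih
    by_contra hu
    exact u.2 ⟨hu, a.val, ha, (h : G.Adj a.val u.val).symm⟩

private lemma aux_reach {V : Type} {G : SimpleGraph V} {S J : Set V}
    (hJ : ∀ ⦃u v : ↥S⦄, (G.induce S).Adj u v → u.val ∈ J → v.val ∈ J) :
    ∀ {a b : ↥S} (_ : (G.induce S).Walk a b) (ha : a.val ∈ J),
      ∃ hb : b.val ∈ J, (G.induce J).Reachable ⟨a.val, ha⟩ ⟨b.val, hb⟩ := by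
  intro a b p
  induction p with
  | nil => exact fun ha => ⟨ha, SimpleGraph.Reachable.refl _⟩
  | @cons a u b h q ih =>
    intro ha
    have hu : u.val ∈ J := hJ h ha
    obtain ⟨hb, hr⟩ := ih hu
    exact ⟨hb, (SimpleGraph.Adj.reachable
      (show (G.induce J).Adj ⟨a.val, ha⟩ ⟨u.val, hu⟩ from h)).trans hr⟩

/-- If `H` is a handle of `G` and `J` is a co-handle of `H`, then `J` is an interesting
set of the complement of `G`. -/
theorem cohandle_interesting_in_compl
    {V : Type} [Fintype V] (G : SimpleGraph V) (H J : Set V)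
    (hH : IsHandle G H) (hJ : IsCohandleOf G J H) :
    IsInteresting Gᶜ J := by
  classical
  obtain ⟨hcard, hconnH, -, -⟩ := hH
  obtain ⟨⟨c, hc⟩, hne, hNJ⟩ := hJ
  have hHS : H ⊆ (Nset G H)ᶜ := fun x hx hmem => hmem.1 hx
  have hJsub : J ⊆ (Nset G H)ᶜ := by
    rintro z hz
    rw [← hc] at hz
    obtain ⟨u, -, rfl⟩ := hz
    exact u.2
  have hmemJ : ∀ u : ↥((Nset G H)ᶜ), u.val ∈ J ↔ u ∈ c.supp := by
    intro u
    rw [← hc]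
    constructor
    · rintro ⟨w, hw, hwu⟩
      rwa [show w = u from Subtype.ext hwu] at hw
    · intro hu; exact ⟨u, hu, rfl⟩
  obtain ⟨v0, hv0⟩ := c.exists_rep
  have hv0J : v0.val ∈ J := (hmemJ v0).2 (by rwa [ConnectedComponent.mem_supp_iff])
  -- closure of J under adjacency in the induced graph
  have hclosed : ∀ ⦃u v : ↥((Nset G H)ᶜ)⦄, (G.induce (Nset G H)ᶜ).Adj u v →
      u.val ∈ J → v.val ∈ J := by
    intro u v huv hu
    have hu' := (hmemJ u).1 hu
    rw [ConnectedComponent.mem_supp_iff] at hu'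
    refine (hmemJ v).2 ?_
    rw [ConnectedComponent.mem_supp_iff, ← hu']
    exact (ConnectedComponent.sound huv.symm.reachable)
  -- H and J are disjoint
  have hHJ : ∀ x ∈ H, x ∉ J := by
    intro x hx hxJ
    apply hne
    have hxS : (⟨x, hHS hx⟩ : ↥((Nset G H)ᶜ)) ∈ c.supp := (hmemJ _).1 hxJ
    rw [ConnectedComponent.mem_supp_iff] at hxS
    ext z
    constructor
    · intro hz
      have hz' := hz
      rw [← hc] at hz'
      obtain ⟨u, hu, rfl⟩ := hz'
      rw [ConnectedComponent.mem_supp_iff] at hu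
      have hr : (G.induce (Nset G H)ᶜ).Reachable ⟨x, hHS hx⟩ u :=
        ConnectedComponent.exact (hxS.trans hu.symm)
      obtain ⟨p⟩ := hr
      exact aux_stay p hx
    · intro hzH
      have hr := hconnH.preconnected ⟨x, hx⟩ ⟨z, hzH⟩
      let f : G.induce H →g G.induce (Nset G H)ᶜ :=
        ⟨fun v => ⟨v.val, hHS v.2⟩, fun h => h⟩
      have hr' : (G.induce (Nset G H)ᶜ).Reachable ⟨x, hHS hx⟩ ⟨z, hHS hzH⟩ := hr.map f
      refine (hmemJ ⟨z, hHS hzH⟩).2 ?_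
      rw [ConnectedComponent.mem_supp_iff, ← (ConnectedComponent.sound hr'), hxS]
  -- H is contained in C(J) of the complement
  have hHC : ∀ x ∈ H, x ∈ Cset Gᶜ J := by
    intro x hx
    refine ⟨hHJ x hx, fun t ht => ?_⟩
    rw [compl_adj]
    refine ⟨fun hxt => hHJ x hx (hxt ▸ ht), fun hadj => ?_⟩
    have hxN : x ∈ Nset G J := ⟨hHJ x hx, t, ht, hadj⟩
    rw [hNJ] at hxN
    exact hxN.1 hx
  refine ⟨⟨v0.val, hv0J⟩, ?_, ?_⟩
  · rw [compl_compl]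
    haveI : Nonempty ↥J := ⟨⟨v0.val, hv0J⟩⟩
    refine SimpleGraph.Connected.mk fun a b => ?_
    obtain ⟨a, ha⟩ := a
    obtain ⟨b, hb⟩ := b
    have haS : (⟨a, hJsub ha⟩ : ↥((Nset G H)ᶜ)) ∈ c.supp := (hmemJ _).1 ha
    have hbS : (⟨b, hJsub hb⟩ : ↥((Nset G H)ᶜ)) ∈ c.supp := (hmemJ _).1 hb
    rw [ConnectedComponent.mem_supp_iff] at haS hbS
    obtain ⟨p⟩ := ConnectedComponent.exact (haS.trans hbS.symm)
    obtain ⟨hb', hr⟩ := aux_reach hclosed p ha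
    exact hr
  · -- there is an edge inside H, and H ⊆ C(J), so C(J) is not a clique of Gᶜ
    obtain ⟨x, hx, y, hy, hxy⟩ := (Set.one_lt_ncard H.toFinite).1 hcard
    obtain ⟨p⟩ := hconnH.preconnected ⟨x, hx⟩ ⟨y, hy⟩
    cases p with
    | nil => exact (hxy rfl).elim
    | @cons _ u _ h q =>
      intro hclique
      have hUadj : G.Adj x u.val := h
      have := hclique (hHC x hx) (hHC u.val u.2) hUadj.ne
      rw [compl_adj] at this
      exact this.2 hUadj
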